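/- arXiv:2410.12732 — 4 statements merged into one kernel-verified Lean document; each statement's English description precedes it below -/
import Mathlib

section
/- Let ν > -1 and define F^ν(x) = (1/4 - ν²)[π²/(4 sin²(πx/2)) - 1/x²] for x ∈ (0,1], with F^ν(0) := (1/4 - ν²)·π²/12 (the limiting value). Then F^ν extends to a continuous function on [0,1], F^ν is monotone on [0,1], and |F^ν(x)| ≤ |1/4 - ν²|·(π²/4 - 1) for all x ∈ [0,1]. -/
open Real Set

/-- The function `F^ν`, i.e. the difference of the Bessel and Jacobi potentials,
with the limiting value at `x = 0`. -/
noncomputable def Fnu (ν : ℝ) (x : ℝ) : ℝ :=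
  if x = 0 then (1/4 - ν^2) * π^2 / 12
  else (1/4 - ν^2) * (π^2 / (4 * Real.sin (π * x / 2)^2) - 1 / x^2)

namespace FnuAux
open Filter Topology

lemma nonneg_of_deriv (f f' : ℝ → ℝ) (hd : ∀ x, HasDerivAt f (f' x) x)
    (h0 : f 0 = 0) (hpos : ∀ x, 0 ≤ x → 0 ≤ f' x) : ∀ t, 0 ≤ t → 0 ≤ f t := by
  have hmono : MonotoneOn f (Ici 0) := by
    apply monotoneOn_of_deriv_nonneg (convex_Ici 0)
      (fun x _ => (hd x).continuousAt.continuousWithinAt)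
      (fun x _ => (hd x).differentiableAt.differentiableWithinAt)
    intro x hx
    rw [(hd x).deriv]
    exact hpos x (le_of_lt (by simpa using hx))
  intro t ht
  calc (0:ℝ) = f 0 := h0.symm
  _ ≤ f t := hmono self_mem_Ici ht ht

lemma sin_ge_cubic : ∀ t, 0 ≤ t → t - t^3/6 ≤ Real.sin t := by
  intro t ht
  have := nonneg_of_deriv (fun x => Real.sin x - (x - x^3/6))
    (fun x => Real.cos x - (1 - x^2/2))
    (fun x => by
      have h2 : HasDerivAt (fun x : ℝ => x - x^3/6) (1 - x^2/2) x := by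
        have := (hasDerivAt_id x).sub ((hasDerivAt_pow 3 x).div_const 6)
        refine HasDerivAt.congr_deriv this ?_
        ring
      exact (Real.hasDerivAt_sin x).sub h2)
    (by norm_num)
    (fun x hx => sub_nonneg.2 Real.one_sub_sq_div_two_le_cos) t ht
  linarith

lemma cos_le_quartic : ∀ t, 0 ≤ t → Real.cos t ≤ 1 - t^2/2 + t^4/24 := by
  intro t ht
  have := nonneg_of_deriv (fun x => (1 - x^2/2 + x^4/24) - Real.cos x)
    (fun x => Real.sin x - (x - x^3/6))
    (fun x => by
      have h2 : HasDerivAt (fun x : ℝ => 1 - x^2/2 + x^4/24) (x^3/6 - x) x := by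
        have := (((hasDerivAt_pow 2 x).div_const 2).const_sub 1).add
          ((hasDerivAt_pow 4 x).div_const 24)
        refine HasDerivAt.congr_deriv this ?_
        ring
      have := h2.sub (Real.hasDerivAt_cos x)
      refine HasDerivAt.congr_deriv this ?_
      ring)
    (by norm_num)
    (fun x hx => sub_nonneg.2 (sin_ge_cubic x hx)) t ht
  linarith

lemma sin_le_quintic : ∀ t, 0 ≤ t → Real.sin t ≤ t - t^3/6 + t^5/120 := by
  intro t ht
  have := nonneg_of_deriv (fun x => (x - x^3/6 + x^5/120) - Real.sin x)
    (fun x => (1 - x^2/2 + x^4/24) - Real.cos x)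
    (fun x => by
      have h2 : HasDerivAt (fun x : ℝ => x - x^3/6 + x^5/120) (1 - x^2/2 + x^4/24) x := by
        have := ((hasDerivAt_id x).sub ((hasDerivAt_pow 3 x).div_const 6)).add
          ((hasDerivAt_pow 5 x).div_const 120)
        refine HasDerivAt.congr_deriv this ?_
        ring
      exact h2.sub (Real.hasDerivAt_sin x))
    (by norm_num)
    (fun x hx => sub_nonneg.2 (cos_le_quartic x hx)) t ht
  linarith

lemma sq_le_of_le_pi_div_two (t : ℝ) (h0 : 0 < t) (h1 : t ≤ π/2) : t^2 ≤ 2.49 := by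
  have ht : t ≤ 1.575 := by nlinarith [Real.pi_lt_d2]
  nlinarith

/-- Key inequality for monotonicity: `t³ cos t ≤ sin³ t` on `(0, π/2]`. -/
lemma key_mono (t : ℝ) (h0 : 0 < t) (h1 : t ≤ π/2) :
    t^3 * Real.cos t ≤ Real.sin t ^ 3 := by
  have hpi := sq_le_of_le_pi_div_two t h0 h1
  have hs := sin_ge_cubic t h0.le
  have hc := cos_le_quartic t h0.le
  have hnn : 0 ≤ t - t^3/6 := by nlinarith
  have hcube : (t - t^3/6)^3 ≤ Real.sin t ^ 3 := pow_le_pow_left₀ hnn hs 3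
  have hmid : t^3 * (1 - t^2/2 + t^4/24) ≤ (t - t^3/6)^3 := by
    nlinarith [mul_le_mul_of_nonneg_left hpi (le_of_lt (pow_pos h0 7)), pow_nonneg h0.le 7]
  have h3 : t^3 * Real.cos t ≤ t^3 * (1 - t^2/2 + t^4/24) :=
    mul_le_mul_of_nonneg_left hc (le_of_lt (pow_pos h0 3))
  linarith

/-- `N := 3t² - 3 sin²t - t² sin²t ≥ 0` on `(0, π/2]`. -/
lemma key_low (t : ℝ) (h0 : 0 < t) (h1 : t ≤ π/2) :
    0 ≤ 3*t^2 - 3*Real.sin t^2 - t^2*Real.sin t^2 := by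
  have hpi := sq_le_of_le_pi_div_two t h0 h1
  have hs0 : 0 ≤ Real.sin t :=
    Real.sin_nonneg_of_nonneg_of_le_pi h0.le (by nlinarith [Real.pi_pos])
  have hs := sin_le_quintic t h0.le
  have hp0 : 0 ≤ t - t^3/6 + t^5/120 := le_trans hs0 hs
  have hsq : Real.sin t^2 ≤ (t - t^3/6 + t^5/120)^2 := by nlinarith
  have key : (3 + t^2) * (t - t^3/6 + t^5/120)^2 ≤ 3*t^2 := by
    nlinarith [mul_nonneg (sub_nonneg.2 hpi) (pow_nonneg h0.le 4),
      mul_nonneg (sub_nonneg.2 hpi) (pow_nonneg h0.le 6),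
      mul_nonneg (sub_nonneg.2 hpi) (pow_nonneg h0.le 8),
      mul_nonneg (sub_nonneg.2 hpi) (pow_nonneg h0.le 10),
      pow_nonneg h0.le 12, pow_nonneg h0.le 10]
  nlinarith [mul_le_mul_of_nonneg_left hsq (sq_nonneg t)]

/-- `N ≤ t⁶` on `(0, π/2]`. -/
lemma key_upp (t : ℝ) (h0 : 0 < t) (h1 : t ≤ π/2) :
    3*t^2 - 3*Real.sin t^2 - t^2*Real.sin t^2 ≤ t^6 := by
  have hpi := sq_le_of_le_pi_div_two t h0 h1
  have hs := sin_ge_cubic t h0.le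
  have hst : Real.sin t ≤ t := Real.sin_le h0.le
  have hnn : 0 ≤ t - t^3/6 := by nlinarith
  have hsq : (t - t^3/6)^2 ≤ Real.sin t^2 := by nlinarith
  nlinarith [mul_le_mul_of_nonneg_left hsq (sq_nonneg t), pow_nonneg h0.le 8]

/-- `sin t ≥ 7t/12` on `(0, π/2]`. -/
lemma sin_ge_lin (t : ℝ) (h0 : 0 < t) (h1 : t ≤ π/2) : 7*t/12 ≤ Real.sin t := by
  have hpi := sq_le_of_le_pi_div_two t h0 h1
  have hs := sin_ge_cubic t h0.le
  nlinarith

/-- The ν-free function. -/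
noncomputable def g (x : ℝ) : ℝ :=
  if x = 0 then π^2/12 else π^2 / (4 * Real.sin (π * x / 2)^2) - 1/x^2

lemma Fnu_eq (ν : ℝ) : Fnu ν = fun x => (1/4 - ν^2) * g x := by
  funext x
  unfold Fnu g
  split <;> ring

section xfacts
variable {x : ℝ} (hx0 : 0 < x) (hx1 : x ≤ 1)

include hx0 hx1

lemma t_pos : 0 < π * x / 2 := by positivity

lemma t_le : π * x / 2 ≤ π / 2 := by
  have := Real.pi_pos
  rw [div_le_div_iff_of_pos_right (by norm_num)]
  nlinarith

lemma s_pos : 0 < Real.sin (π * x / 2) :=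
  Real.sin_pos_of_pos_of_lt_pi (t_pos hx0 hx1)
    (lt_of_le_of_lt (t_le hx0 hx1) (by linarith [Real.pi_pos]))

/-- The fundamental identity `g x - π²/12 = N / (3 x² sin²(πx/2))`. -/
lemma g_sub_eq :
    g x - π^2/12 =
      (3*(π*x/2)^2 - 3*Real.sin (π*x/2)^2 - (π*x/2)^2*Real.sin (π*x/2)^2) /
        (3 * x^2 * Real.sin (π*x/2)^2) := by
  have hs := s_pos hx0 hx1
  rw [g, if_neg hx0.ne']
  field_simp
  ring

lemma g_ge : π^2/12 ≤ g x := by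
  have h := g_sub_eq hx0 hx1
  have hs := s_pos hx0 hx1
  have hN := key_low _ (t_pos hx0 hx1) (t_le hx0 hx1)
  have hD : 0 < 3 * x^2 * Real.sin (π*x/2)^2 := by positivity
  nlinarith [div_nonneg hN hD.le]

lemma g_le_near : g x ≤ π^2/12 + 7*x^2 := by
  have h := g_sub_eq hx0 hx1
  have hs := s_pos hx0 hx1
  have ht0 := t_pos hx0 hx1
  have hN := key_upp _ ht0 (t_le hx0 hx1)
  have hlin := sin_ge_lin _ ht0 (t_le hx0 hx1)
  have hD : 0 < 3 * x^2 * Real.sin (π*x/2)^2 := by positivity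
  have hDge : x^2 * (π*x/2)^2 ≤ 3 * x^2 * Real.sin (π*x/2)^2 := by
    have hsq : (7*(π*x/2)/12)^2 ≤ Real.sin (π*x/2)^2 :=
      pow_le_pow_left₀ (by positivity) hlin 2
    nlinarith [mul_le_mul_of_nonneg_left hsq (sq_nonneg x), sq_nonneg (x*(π*x/2))]
  have hquot : (3*(π*x/2)^2 - 3*Real.sin (π*x/2)^2 - (π*x/2)^2*Real.sin (π*x/2)^2) /
      (3 * x^2 * Real.sin (π*x/2)^2) ≤ 7*x^2 := by
    rw [div_le_iff₀ hD]
    have hpi4 : (π*x/2)^6 ≤ 7*x^2 * (x^2 * (π*x/2)^2) := by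
      have hp : π ≤ 3.15 := Real.pi_lt_d2.le
      have hp0 : 0 < π := Real.pi_pos
      have h6 : (π*x/2)^6 = (π/2)^4 * (x^2 * (π*x/2)^2) * x^2 := by ring
      have h4 : (π/2)^4 ≤ 7 := by
        have hp2 : π^2 ≤ 9.9225 := by nlinarith
        nlinarith [sq_nonneg π]
      nlinarith [sq_nonneg x, sq_nonneg (π*x/2), mul_nonneg (sq_nonneg x) (sq_nonneg (π*x/2)),
        mul_nonneg (mul_nonneg (sq_nonneg x) (sq_nonneg (π*x/2))) (sq_nonneg x)]
    calc 3*(π*x/2)^2 - 3*Real.sin (π*x/2)^2 - (π*x/2)^2*Real.sin (π*x/2)^2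
        ≤ (π*x/2)^6 := hN
      _ ≤ 7*x^2 * (x^2 * (π*x/2)^2) := hpi4
      _ ≤ 7*x^2 * (3 * x^2 * Real.sin (π*x/2)^2) := by
          apply mul_le_mul_of_nonneg_left hDge (by positivity)
  linarith

end xfacts

lemma hasDerivAt_g {x : ℝ} (hx0 : 0 < x) (hx1 : x ≤ 1) :
    HasDerivAt g (2/x^3 - π^3 * Real.cos (π*x/2) / (4 * Real.sin (π*x/2)^3)) x := by
  have hs := s_pos hx0 hx1
  have hu : HasDerivAt (fun y : ℝ => π * y / 2) (π/2) x := by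
    simpa using ((hasDerivAt_id x).const_mul π).div_const 2
  have hsin : HasDerivAt (fun y => Real.sin (π*y/2)) (Real.cos (π*x/2) * (π/2)) x :=
    (Real.hasDerivAt_sin _).comp x hu
  have hden : HasDerivAt (fun y => 4 * Real.sin (π*y/2)^2)
      (4 * ((2:ℕ) * Real.sin (π*x/2) ^ 1 * (Real.cos (π*x/2) * (π/2)))) x :=
    (hsin.pow 2).const_mul 4
  have h1 := (hasDerivAt_const x (π^2)).div hden
    (by simpa using (mul_pos four_pos (pow_pos hs 2)).ne')
  have h2 := (hasDerivAt_const x (1:ℝ)).div (hasDerivAt_pow 2 x)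
    (by simpa using (pow_pos hx0 2).ne')
  have hsum := h1.sub h2
  have hD : HasDerivAt (fun y => π^2 / (4 * Real.sin (π*y/2)^2) - 1/y^2)
      (2/x^3 - π^3 * Real.cos (π*x/2) / (4 * Real.sin (π*x/2)^3)) x := by
    refine HasDerivAt.congr_deriv hsum ?_
    field_simp
    ring
  apply hD.congr_of_eventuallyEq
  filter_upwards [eventually_ne_nhds hx0.ne'] with y hy
  simp [g, hy]

lemma deriv_g_nonneg {x : ℝ} (hx0 : 0 < x) (hx1 : x ≤ 1) :
    0 ≤ 2/x^3 - π^3 * Real.cos (π*x/2) / (4 * Real.sin (π*x/2)^3) := by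
  have hs := s_pos hx0 hx1
  have hk := key_mono (π*x/2) (t_pos hx0 hx1) (t_le hx0 hx1)
  rw [sub_nonneg, div_le_div_iff₀ (by positivity) (by positivity)]
  nlinarith

lemma g_mono : MonotoneOn g (Ioc 0 1) := by
  apply monotoneOn_of_deriv_nonneg (convex_Ioc 0 1)
  · exact fun x hx => (hasDerivAt_g hx.1 hx.2).continuousAt.continuousWithinAt
  · intro x hx
    rw [interior_Ioc] at hx
    exact (hasDerivAt_g hx.1 hx.2.le).differentiableAt.differentiableWithinAt
  · intro x hx
    rw [interior_Ioc] at hx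
    rw [(hasDerivAt_g hx.1 hx.2.le).deriv]
    exact deriv_g_nonneg hx.1 hx.2.le

lemma g_zero : g 0 = π^2/12 := by simp [g]

lemma g_one : g 1 = π^2/4 - 1 := by
  rw [g, if_neg one_ne_zero, show π*1/2 = π/2 by ring, Real.sin_pi_div_two]
  norm_num

lemma g_mono_full : MonotoneOn g (Icc 0 1) := by
  intro a ha b hb hab
  rcases eq_or_lt_of_le ha.1 with h0 | h0
  · rcases eq_or_lt_of_le hb.1 with h0' | h0'
    · rw [← h0, ← h0']
    · rw [← h0, g_zero]
      exact g_ge h0' hb.2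
  · exact g_mono ⟨h0, ha.2⟩ ⟨lt_of_lt_of_le h0 hab, hb.2⟩ hab

lemma g_cont : ContinuousOn g (Icc 0 1) := by
  intro x hx
  rcases eq_or_lt_of_le hx.1 with h0 | h0
  · have hb : ∀ y ∈ Icc (0:ℝ) 1, |g y - π^2/12| ≤ 7*y^2 := by
      intro y hy
      rcases eq_or_lt_of_le hy.1 with h0' | h0'
      · simp [← h0', g_zero]
      · rw [abs_le]
        constructor
        · nlinarith [g_ge h0' hy.2, sq_nonneg y]
        · nlinarith [g_le_near h0' hy.2]
    have h7 : Tendsto (fun y : ℝ => 7*y^2) (𝓝[Icc 0 1] 0) (𝓝 0) := by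
      have : Tendsto (fun y : ℝ => 7*y^2) (𝓝 0) (𝓝 (7*0^2)) :=
        (continuous_const.mul (continuous_pow 2)).tendsto 0
      simpa using this.mono_left nhdsWithin_le_nhds
    have hT : Tendsto (fun y => g y - π^2/12) (𝓝[Icc 0 1] 0) (𝓝 0) :=
      squeeze_zero_norm' (eventually_mem_nhdsWithin.mono fun y hy => by
        rw [Real.norm_eq_abs]; exact hb y hy) h7
    have : Tendsto g (𝓝[Icc 0 1] 0) (𝓝 (π^2/12)) := by
      have := hT.add (tendsto_const_nhds (x := π^2/12))
      simpa using this
    rw [← h0]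
    unfold ContinuousWithinAt
    rw [g_zero]
    exact this
  · exact (hasDerivAt_g h0 hx.2).continuousAt.continuousWithinAt

lemma g_nonneg {x : ℝ} (hx : x ∈ Icc (0:ℝ) 1) : 0 ≤ g x := by
  have hpi := Real.pi_pos
  rcases eq_or_lt_of_le hx.1 with h0 | h0
  · rw [← h0, g_zero]; positivity
  · nlinarith [g_ge h0 hx.2]

lemma g_le {x : ℝ} (hx : x ∈ Icc (0:ℝ) 1) : g x ≤ π^2/4 - 1 := by
  have h1 : g x ≤ g 1 := g_mono_full hx (by norm_num) hx.2
  rw [g_one] at h1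
  exact h1

end FnuAux

open FnuAux in
theorem Fnu_properties (ν : ℝ) (hν : -1 < ν ) :
    ContinuousOn (Fnu ν) (Icc 0 1) ∧
    (MonotoneOn (Fnu ν) (Icc 0 1) ∨ AntitoneOn (Fnu ν) (Icc 0 1)) ∧
    ∀ x ∈ Icc (0:ℝ) 1, |Fnu ν x| ≤ |1/4 - ν^2| * (π^2 / 4 - 1) := by
  rw [Fnu_eq]
  refine ⟨continuousOn_const.mul g_cont, ?_, ?_⟩
  · rcases le_or_gt 0 (1/4 - ν^2) with hc | hc
    · exact Or.inl fun a ha b hb hab =>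
        mul_le_mul_of_nonneg_left (g_mono_full ha hb hab) hc
    · exact Or.inr fun a ha b hb hab =>
        mul_le_mul_of_nonpos_left (g_mono_full ha hb hab) hc.le
  · intro x hx
    rw [abs_mul, abs_of_nonneg (g_nonneg hx)]
    exact mul_le_mul_of_nonneg_left (g_le hx) (abs_nonneg _)
end

section
/- (Hardy-type inequality.) Let f : (0,1) → ℂ be continuously differentiable with f(x) = O(x^{3/2}) as x → 0⁺ and with f'/x ∈ L²((0,1), dx). Then f/x² ∈ L²((0,1), dx) and ‖f/x²‖_{L²(0,1)} ≤ (2/3)·‖f'/x‖_{L²(0,1)}. -/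
open Real Set MeasureTheory Filter Topology Asymptotics
open scoped ENNReal

set_option maxHeartbeats 1000000

private lemma hardy_aux_int (f : ℝ → ℂ)
    (hgc : ContinuousOn (deriv f) (Ioo 0 1))
    (hL2 : MemLp (fun x : ℝ => deriv f x / (x : ℂ)) 2 (volume.restrict (Ioo 0 1))) :
    IntegrableOn (deriv f) (Ioo 0 1) volume := by
  set μ := volume.restrict (Ioo (0:ℝ) 1) with hμ
  haveI : IsFiniteMeasure μ := by
    constructor
    simp [hμ, Real.volume_Ioo]
  have hid : MemLp (fun t : ℝ => (t : ℂ)) 2 μ := by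
    refine MemLp.of_bound ?_ 1 ?_
    · exact (Complex.continuous_ofReal.aestronglyMeasurable)
    · filter_upwards [ae_restrict_mem measurableSet_Ioo] with t ht
      rw [Complex.norm_real, Real.norm_eq_abs, abs_of_pos ht.1]
      exact ht.2.le
  have hprod : MemLp ((fun t : ℝ => (t : ℂ)) • (fun t : ℝ => deriv f t / (t : ℂ))) 1 μ :=
    MemLp.smul (p := 2) (q := 2) (r := 1) hL2 hid (hpqr := ⟨by simp [one_div, ENNReal.inv_two_add_inv_two]⟩)
  have hInt1 : Integrable (fun t : ℝ => (t : ℂ) * (deriv f t / (t : ℂ))) μ :=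
    memLp_one_iff_integrable.mp hprod
  have : Integrable (deriv f) μ := by
    refine hInt1.congr ?_
    filter_upwards [ae_restrict_mem measurableSet_Ioo] with t ht
    have ht0 : (t : ℂ) ≠ 0 := by exact_mod_cast ne_of_gt ht.1
    field_simp
  exact this

private lemma hardy_aux_rep (f : ℝ → ℂ)
    (hf : ContDiffOn ℝ 1 f (Ioo 0 1))
    (hO : (fun x : ℝ => f x) =O[𝓝[>] 0] fun x : ℝ => x ^ ((3:ℝ)/2))
    (hInt : IntegrableOn (deriv f) (Ioo 0 1) volume) :
    ∀ x ∈ Ioo (0:ℝ) 1, f x = ∫ t in Ioc 0 x, deriv f t := by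
  intro x hx
  set ε : ℕ → ℝ := fun n => x * (1/2) ^ (n+1) with hε
  have hε_pos : ∀ n, 0 < ε n := fun n => mul_pos hx.1 (by positivity)
  have hε_lt : ∀ n, ε n < x := by
    intro n
    have : (1/2:ℝ) ^ (n+1) < 1 := pow_lt_one₀ (by norm_num) (by norm_num) (by omega)
    calc ε n = x * (1/2)^(n+1) := rfl
    _ < x * 1 := by exact mul_lt_mul_of_pos_left this hx.1
    _ = x := mul_one x
  have hε_anti : Antitone ε := by
    intro m n hmn
    exact mul_le_mul_of_nonneg_left
      (pow_le_pow_of_le_one (by norm_num) (by norm_num) (by omega)) hx.1.le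
  have hε_tendsto : Tendsto ε atTop (𝓝 0) := by
    have h2 : Tendsto (fun n : ℕ => (1/2:ℝ) ^ n) atTop (𝓝 0) :=
      tendsto_pow_atTop_nhds_zero_of_lt_one (by norm_num) (by norm_num)
    have h3 : Tendsto (fun n : ℕ => x * (1/2:ℝ) ^ (n+1)) atTop (𝓝 (x * 0)) :=
      (h2.comp (tendsto_add_atTop_nat 1)).const_mul x
    rw [mul_zero] at h3
    exact h3
  -- FTC on each interval
  have hderivAt : ∀ t ∈ Ioo (0:ℝ) 1, HasDerivAt f (deriv f t) t := by
    intro t ht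
    have : DifferentiableAt ℝ f t :=
      (hf.differentiableOn one_ne_zero).differentiableAt (Ioo_mem_nhds ht.1 ht.2)
    exact this.hasDerivAt
  have hsub : ∀ n, Icc (ε n) x ⊆ Ioo (0:ℝ) 1 := by
    intro n t ht
    exact ⟨lt_of_lt_of_le (hε_pos n) ht.1, lt_of_le_of_lt ht.2 hx.2⟩
  have h1 : ∀ n, ∫ t in Ioc (ε n) x, deriv f t = f x - f (ε n) := by
    intro n
    have hle : ε n ≤ x := (hε_lt n).le
    have := intervalIntegral.integral_eq_sub_of_hasDerivAt (f := f) (f' := deriv f)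
      (a := ε n) (b := x) ?_ ?_
    · rw [← this, intervalIntegral.integral_of_le hle]
    · intro t ht
      rw [uIcc_of_le hle] at ht
      exact hderivAt t (hsub n ht)
    · rw [intervalIntegrable_iff_integrableOn_Ioc_of_le hle]
      exact hInt.mono_set (fun t ht => hsub n ⟨ht.1.le, ht.2⟩)
  -- f (ε n) → 0
  have hf0 : Tendsto f (𝓝[>] (0:ℝ)) (𝓝 0) := by
    refine hO.trans_tendsto ?_
    have hc : ContinuousAt (fun y : ℝ => y ^ ((3:ℝ)/2)) 0 :=
      Real.continuousAt_rpow_const 0 _ (Or.inr (by norm_num))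
    have h5 : Tendsto (fun y : ℝ => y ^ ((3:ℝ)/2)) (𝓝[>] (0:ℝ)) (𝓝 ((0:ℝ) ^ ((3:ℝ)/2))) :=
      hc.tendsto.mono_left nhdsWithin_le_nhds
    rwa [Real.zero_rpow (by norm_num)] at h5
  have hε_mem : Tendsto ε atTop (𝓝[>] (0:ℝ)) :=
    tendsto_nhdsWithin_of_tendsto_nhds_of_eventually_within _ hε_tendsto
      (Eventually.of_forall fun n => hε_pos n)
  have h2 : Tendsto (fun n => f (ε n)) atTop (𝓝 0) := hf0.comp hε_mem
  -- integral convergence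
  have h3 : Tendsto (fun n => ∫ t in Ioc (ε n) x, deriv f t) atTop
      (𝓝 (∫ t in Ioc 0 x, deriv f t)) := by
    have hmono : Monotone fun n => Ioc (ε n) x := by
      intro m n hmn
      exact Ioc_subset_Ioc_left (hε_anti hmn)
    have hunion : ⋃ n, Ioc (ε n) x = Ioc 0 x := by
      ext t
      simp only [mem_iUnion, mem_Ioc]
      constructor
      · rintro ⟨n, h1, h2⟩
        exact ⟨lt_trans (hε_pos n) h1, h2⟩
      · rintro ⟨ht0, htx⟩
        obtain ⟨n, hn⟩ := (hε_tendsto.eventually_lt_const ht0).exists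
        exact ⟨n, hn, htx⟩
    have hint : IntegrableOn (deriv f) (⋃ n, Ioc (ε n) x) volume := by
      rw [hunion]
      refine hInt.mono_set (fun t ht => ⟨ht.1, lt_of_le_of_lt ht.2 hx.2⟩)
    have := tendsto_setIntegral_of_monotone (fun n => measurableSet_Ioc) hmono hint
    rwa [hunion] at this
  have h4 : Tendsto (fun n => f x - f (ε n)) atTop (𝓝 (f x - 0)) :=
    tendsto_const_nhds.sub h2
  rw [sub_zero] at h4
  have h5 : Tendsto (fun n => ∫ t in Ioc (ε n) x, deriv f t) atTop (𝓝 (f x)) := by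
    simpa only [h1] using h4
  exact tendsto_nhds_unique h5 h3

private lemma hardy_aux_pt (f : ℝ → ℂ) (D : ℝ → ℂ) (hD : Measurable D) {x : ℝ}
    (hx : x ∈ Ioo (0:ℝ) 1)
    (hrep : f x = ∫ t in Ioc 0 x, deriv f t)
    (hDae : ∀ᵐ t ∂(volume.restrict (Ioc 0 x)), D t = deriv f t / (t:ℂ)) :
    (‖f x / (x:ℂ)^2‖₊ : ℝ≥0∞) ^ (2:ℝ) ≤
      ENNReal.ofReal ((2/3) * x ^ (-(5:ℝ)/2)) *
        ∫⁻ t in Ioc 0 x, (‖D t‖₊ : ℝ≥0∞) ^ (2:ℝ) * ENNReal.ofReal (t ^ ((3:ℝ)/2)) := by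
  set ν := volume.restrict (Ioc (0:ℝ) x) with hν
  set A : ℝ → ℝ≥0∞ := fun t => (‖D t‖₊ : ℝ≥0∞) * ENNReal.ofReal (t ^ ((3:ℝ)/4)) with hA
  set B : ℝ → ℝ≥0∞ := fun t => ENNReal.ofReal (t ^ ((1:ℝ)/4)) with hB
  set K : ℝ≥0∞ := ∫⁻ t, A t ^ (2:ℝ) ∂ν with hK
  -- step 1 : norm bound by lintegral
  have step1 : (‖f x‖₊ : ℝ≥0∞) ≤ ∫⁻ t, (‖deriv f t‖₊ : ℝ≥0∞) ∂ν := by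
    rw [hrep]
    exact enorm_integral_le_lintegral_enorm _
  -- a.e. pointwise identity A * B = ‖deriv f‖₊
  have habA : ∀ᵐ t ∂ν, (A * B) t = (‖deriv f t‖₊ : ℝ≥0∞) := by
    filter_upwards [ae_restrict_mem measurableSet_Ioc, hDae] with t ht hDt
    have ht0 : (0:ℝ) < t := ht.1
    have hcoe : (ENNReal.ofReal t) = (‖(t:ℂ)‖₊ : ℝ≥0∞) := by
      rw [← enorm_eq_nnnorm, ← ofReal_norm_eq_enorm, Complex.norm_real, Real.norm_eq_abs, abs_of_pos ht0]
    have hmulpow : t ^ ((3:ℝ)/4) * t ^ ((1:ℝ)/4) = t := by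
      rw [← Real.rpow_add ht0]
      norm_num
    have htne : (‖(t:ℂ)‖₊ : ℝ≥0∞) ≠ 0 := by
      simp only [ne_eq, ENNReal.coe_eq_zero, nnnorm_eq_zero]
      exact_mod_cast ne_of_gt ht0
    calc (A * B) t = (‖D t‖₊ : ℝ≥0∞) * (ENNReal.ofReal (t ^ ((3:ℝ)/4)) * ENNReal.ofReal (t ^ ((1:ℝ)/4))) := by
          simp [hA, hB, mul_assoc]
      _ = (‖D t‖₊ : ℝ≥0∞) * ENNReal.ofReal t := by
          rw [← ENNReal.ofReal_mul (by positivity), hmulpow]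
      _ = (‖deriv f t / (t:ℂ)‖₊ : ℝ≥0∞) * (‖(t:ℂ)‖₊ : ℝ≥0∞) := by rw [hDt, hcoe]
      _ = (‖deriv f t‖₊ : ℝ≥0∞) := by
          rw [← ENNReal.coe_mul, ← nnnorm_mul, div_mul_cancel₀]
          exact_mod_cast ne_of_gt ht0
  -- Hölder
  have hrpm : ∀ c : ℝ, Measurable (fun t : ℝ => t ^ c) := fun c => by measurability
  have hAmeas : AEMeasurable A ν :=
    ((hD.nnnorm.coe_nnreal_ennreal).mul
      (ENNReal.measurable_ofReal.comp (hrpm _))).aemeasurable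
  have hBmeas : AEMeasurable B ν :=
    (ENNReal.measurable_ofReal.comp (hrpm _)).aemeasurable
  have hHolder : ∫⁻ t, (A * B) t ∂ν ≤ K ^ ((1:ℝ)/2) * (∫⁻ t, B t ^ (2:ℝ) ∂ν) ^ ((1:ℝ)/2) := by
    have := ENNReal.lintegral_mul_le_Lp_mul_Lq (p := 2) (q := 2) ν Real.HolderConjugate.two_two hAmeas hBmeas
    simpa [hK] using this
  -- compute ∫ B²
  have hB2 : ∫⁻ t, B t ^ (2:ℝ) ∂ν = ENNReal.ofReal ((2/3) * x ^ ((3:ℝ)/2)) := by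
    have hae : ∀ᵐ t ∂ν, B t ^ (2:ℝ) = ENNReal.ofReal (t ^ ((1:ℝ)/2)) := by
      filter_upwards [ae_restrict_mem measurableSet_Ioc] with t ht
      show ENNReal.ofReal (t ^ ((1:ℝ)/4)) ^ (2:ℝ) = _
      rw [ENNReal.ofReal_rpow_of_pos (Real.rpow_pos_of_pos ht.1 _),
        ← Real.rpow_mul ht.1.le]
      norm_num
    rw [lintegral_congr_ae hae]
    have hint : IntegrableOn (fun t : ℝ => t ^ ((1:ℝ)/2)) (Ioc 0 x) volume := by
      have := (intervalIntegral.intervalIntegrable_rpow (μ := volume) (a := 0) (b := x)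
        (r := (1:ℝ)/2) (Or.inl (by norm_num)))
      rwa [intervalIntegrable_iff_integrableOn_Ioc_of_le hx.1.le] at this
    rw [← ofReal_integral_eq_lintegral_ofReal hint ?_]
    · congr 1
      have : ∫ t in Ioc 0 x, t ^ ((1:ℝ)/2) = ∫ t in (0:ℝ)..x, t ^ ((1:ℝ)/2) := by
        rw [intervalIntegral.integral_of_le hx.1.le]
      rw [this, integral_rpow (Or.inl (by norm_num)), Real.zero_rpow (by norm_num)]
      norm_num
      ring
    · filter_upwards [ae_restrict_mem measurableSet_Ioc] with t ht
      exact Real.rpow_nonneg ht.1.le _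
  -- combine : ‖f x‖² ≤ K * (2/3) x^{3/2}
  have step2 : (‖f x‖₊ : ℝ≥0∞) ^ (2:ℝ) ≤ K * ENNReal.ofReal ((2/3) * x ^ ((3:ℝ)/2)) := by
    have h1 : (‖f x‖₊ : ℝ≥0∞) ≤ K ^ ((1:ℝ)/2) * (ENNReal.ofReal ((2/3) * x ^ ((3:ℝ)/2))) ^ ((1:ℝ)/2) := by
      refine step1.trans ?_
      rw [← lintegral_congr_ae habA, ← hB2]
      exact hHolder
    have h2 := ENNReal.rpow_le_rpow h1 (by norm_num : (0:ℝ) ≤ 2)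
    calc (‖f x‖₊ : ℝ≥0∞) ^ (2:ℝ) ≤ (K ^ ((1:ℝ)/2) * (ENNReal.ofReal ((2/3) * x ^ ((3:ℝ)/2))) ^ ((1:ℝ)/2)) ^ (2:ℝ) := h2
      _ = K * ENNReal.ofReal ((2/3) * x ^ ((3:ℝ)/2)) := by
          rw [ENNReal.mul_rpow_of_nonneg _ _ (by norm_num : (0:ℝ) ≤ 2),
            ← ENNReal.rpow_mul, ← ENNReal.rpow_mul]
          norm_num
  -- A² = G a.e.
  have hA2 : ∀ᵐ t ∂ν, A t ^ (2:ℝ) = (‖D t‖₊ : ℝ≥0∞) ^ (2:ℝ) * ENNReal.ofReal (t ^ ((3:ℝ)/2)) := by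
    filter_upwards [ae_restrict_mem measurableSet_Ioc] with t ht
    show ((‖D t‖₊ : ℝ≥0∞) * ENNReal.ofReal (t ^ ((3:ℝ)/4))) ^ (2:ℝ) = _
    rw [ENNReal.mul_rpow_of_nonneg _ _ (by norm_num : (0:ℝ) ≤ 2),
      ENNReal.ofReal_rpow_of_pos (Real.rpow_pos_of_pos ht.1 _),
      ← Real.rpow_mul ht.1.le]
    norm_num
  have hKeq : K = ∫⁻ t in Ioc 0 x, (‖D t‖₊ : ℝ≥0∞) ^ (2:ℝ) * ENNReal.ofReal (t ^ ((3:ℝ)/2)) :=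
    lintegral_congr_ae hA2
  -- final : multiply by x^{-4}
  have hxpos := hx.1
  have hLHS : (‖f x / (x:ℂ)^2‖₊ : ℝ≥0∞) ^ (2:ℝ) =
      ENNReal.ofReal (x ^ (-(4:ℝ))) * (‖f x‖₊ : ℝ≥0∞) ^ (2:ℝ) := by
    rw [← enorm_eq_nnnorm, ← enorm_eq_nnnorm, ← ofReal_norm_eq_enorm, ← ofReal_norm_eq_enorm,
      ENNReal.ofReal_rpow_of_nonneg (norm_nonneg _) (by norm_num : (0:ℝ) ≤ 2),
      ENNReal.ofReal_rpow_of_nonneg (norm_nonneg _) (by norm_num : (0:ℝ) ≤ 2),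
      ← ENNReal.ofReal_mul (by positivity)]
    congr 1
    rw [norm_div, norm_pow, Complex.norm_real, Real.norm_eq_abs, abs_of_pos hxpos]
    rw [Real.div_rpow (norm_nonneg _) (by positivity)]
    rw [← Real.rpow_natCast x 2, ← Real.rpow_mul hxpos.le]
    rw [div_eq_mul_inv, ← Real.rpow_neg hxpos.le]
    norm_num [mul_comm]
  rw [hLHS]
  calc ENNReal.ofReal (x ^ (-(4:ℝ))) * (‖f x‖₊ : ℝ≥0∞) ^ (2:ℝ)
      ≤ ENNReal.ofReal (x ^ (-(4:ℝ))) * (K * ENNReal.ofReal ((2/3) * x ^ ((3:ℝ)/2))) :=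
        mul_le_mul_right step2 _
    _ = (ENNReal.ofReal (x ^ (-(4:ℝ))) * ENNReal.ofReal ((2/3) * x ^ ((3:ℝ)/2))) * K := by ring
    _ = ENNReal.ofReal ((2/3) * x ^ (-(5:ℝ)/2)) * K := by
        rw [← ENNReal.ofReal_mul (by positivity)]
        congr 1
        rw [mul_comm (x ^ (-(4:ℝ))), mul_assoc, ← Real.rpow_add hxpos]
        norm_num
    _ = ENNReal.ofReal ((2/3) * x ^ (-(5:ℝ)/2)) *
        ∫⁻ t in Ioc 0 x, (‖D t‖₊ : ℝ≥0∞) ^ (2:ℝ) * ENNReal.ofReal (t ^ ((3:ℝ)/2)) := by rw [hKeq]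

private lemma hardy_aux_swap (G : ℝ → ℝ≥0∞) (hG : Measurable G) :
    (∫⁻ x in Ioo (0:ℝ) 1, ENNReal.ofReal ((2/3) * x ^ (-(5:ℝ)/2)) * ∫⁻ t in Ioc 0 x, G t) ≤
      ∫⁻ t in Ioo (0:ℝ) 1, G t * ENNReal.ofReal ((4/9) * t ^ (-(3:ℝ)/2)) := by
  set μ := volume.restrict (Ioo (0:ℝ) 1) with hμ
  set c : ℝ → ℝ≥0∞ := fun x => ENNReal.ofReal ((2/3) * x ^ (-(5:ℝ)/2)) with hc
  have hcm : Measurable c := by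
    apply ENNReal.measurable_ofReal.comp
    have : Measurable (fun x : ℝ => x ^ (-(5:ℝ)/2)) := by measurability
    exact this.const_mul _
  set H : ℝ × ℝ → ℝ≥0∞ :=
    fun q => {q : ℝ × ℝ | q.2 ≤ q.1}.indicator (fun q => c q.1 * G q.2) q with hH
  have hHm : Measurable H :=
    (((hcm.comp measurable_fst).mul (hG.comp measurable_snd)).indicator
      (measurableSet_le measurable_snd measurable_fst))
  have key1 : ∀ x ∈ Ioo (0:ℝ) 1, ∫⁻ t, H (x, t) ∂μ = c x * ∫⁻ t in Ioc 0 x, G t := by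
    intro x hx
    have h1 : ∀ t, H (x, t) = (Iic x).indicator (fun t => c x * G t) t := by
      intro t
      by_cases h : t ≤ x
      · simp [hH, Set.indicator, h]
      · simp [hH, Set.indicator, h]
    simp only [h1]
    rw [lintegral_indicator measurableSet_Iic, lintegral_const_mul _ hG]
    congr 2
    rw [hμ, Measure.restrict_restrict measurableSet_Iic]
    congr 1
    ext t
    constructor
    · rintro ⟨h1, h2, h3⟩
      exact ⟨h2, h1⟩
    · rintro ⟨h1, h2⟩
      exact ⟨h2, h1, lt_of_le_of_lt h2 hx.2⟩
  have key2 : ∀ t ∈ Ioo (0:ℝ) 1, ∫⁻ x, H (x, t) ∂μ = G t * ∫⁻ x in Ico t 1, c x := by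
    intro t ht
    have h1 : ∀ x, H (x, t) = (Ici t).indicator (fun x => c x * G t) x := by
      intro x
      by_cases h : t ≤ x
      · simp [hH, Set.indicator, h]
      · simp [hH, Set.indicator, h]
    simp only [h1]
    rw [lintegral_indicator measurableSet_Ici, lintegral_mul_const _ hcm, mul_comm]
    congr 2
    rw [hμ, Measure.restrict_restrict measurableSet_Ici]
    congr 1
    ext x
    constructor
    · rintro ⟨h1, h2, h3⟩
      exact ⟨h1, h3⟩
    · rintro ⟨h1, h2⟩
      exact ⟨h1, lt_of_lt_of_le ht.1 h1, h2⟩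
  have hIco : ∀ t ∈ Ioo (0:ℝ) 1,
      (∫⁻ x in Ico t 1, c x) ≤ ENNReal.ofReal ((4/9) * t ^ (-(3:ℝ)/2)) := by
    intro t ht
    rw [Measure.restrict_congr_set Ico_ae_eq_Ioc]
    have h0 : (0:ℝ) ∉ uIcc t 1 := by
      rw [uIcc_of_le ht.2.le]
      intro h
      exact absurd h.1 (not_le.mpr ht.1)
    have hint : IntegrableOn (fun x : ℝ => (2/3) * x ^ (-(5:ℝ)/2)) (Ioc t 1) volume := by
      have := (intervalIntegral.intervalIntegrable_rpow (μ := volume) (a := t) (b := 1)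
        (r := -(5:ℝ)/2) (Or.inr h0)).const_mul (2/3:ℝ)
      rwa [intervalIntegrable_iff_integrableOn_Ioc_of_le ht.2.le] at this
    rw [hc]
    rw [← ofReal_integral_eq_lintegral_ofReal hint ?_]
    · apply ENNReal.ofReal_le_ofReal
      have heq : ∫ x in Ioc t 1, (2/3) * x ^ (-(5:ℝ)/2) = ∫ x in t..1, (2/3) * x ^ (-(5:ℝ)/2) := by
        rw [intervalIntegral.integral_of_le ht.2.le]
      rw [heq, intervalIntegral.integral_const_mul, integral_rpow (Or.inr ⟨by norm_num, h0⟩),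
        Real.one_rpow]
      have htn : (0:ℝ) ≤ t ^ (-(3:ℝ)/2) := Real.rpow_nonneg ht.1.le _
      have : -(5:ℝ)/2 + 1 = -(3:ℝ)/2 := by norm_num
      rw [this]
      nlinarith [htn]
    · filter_upwards [ae_restrict_mem measurableSet_Ioc] with x hx
      have := Real.rpow_nonneg (lt_trans ht.1 hx.1).le (-(5:ℝ)/2)
      positivity
  have hswap : ∫⁻ x, (∫⁻ t, H (x, t) ∂μ) ∂μ = ∫⁻ t, (∫⁻ x, H (x, t) ∂μ) ∂μ :=
    lintegral_lintegral_swap hHm.aemeasurable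
  calc (∫⁻ x in Ioo (0:ℝ) 1, c x * ∫⁻ t in Ioc 0 x, G t)
      = ∫⁻ x, (∫⁻ t, H (x, t) ∂μ) ∂μ := by
        refine lintegral_congr_ae ?_
        filter_upwards [ae_restrict_mem measurableSet_Ioo] with x hx
        exact (key1 x hx).symm
    _ = ∫⁻ t, (∫⁻ x, H (x, t) ∂μ) ∂μ := hswap
    _ ≤ ∫⁻ t in Ioo (0:ℝ) 1, G t * ENNReal.ofReal ((4/9) * t ^ (-(3:ℝ)/2)) := by
        refine lintegral_mono_ae ?_
        filter_upwards [ae_restrict_mem measurableSet_Ioo] with t ht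
        rw [key2 t ht]
        exact mul_le_mul_right (hIco t ht) _

theorem hardy_type_inequality (f : ℝ → ℂ)
    (hf : ContDiffOn ℝ 1 f (Ioo 0 1))
    (hO : (fun x : ℝ => f x) =O[𝓝[>] 0] fun x : ℝ => x ^ ((3:ℝ)/2))
    (hL2 : MemLp (fun x : ℝ => deriv f x / (x : ℂ)) 2 (volume.restrict (Ioo 0 1))) :
    MemLp (fun x : ℝ => f x / (x : ℂ)^2) 2 (volume.restrict (Ioo 0 1)) ∧
    eLpNorm (fun x : ℝ => f x / (x : ℂ)^2) 2 (volume.restrict (Ioo 0 1))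
      ≤ (2/3 : ℝ≥0∞) * eLpNorm (fun x : ℝ => deriv f x / (x : ℂ)) 2 (volume.restrict (Ioo 0 1)) := by
  set μ := volume.restrict (Ioo (0:ℝ) 1) with hμ
  -- integrability and representation
  have hgc : ContinuousOn (deriv f) (Ioo 0 1) :=
    hf.continuousOn_deriv_of_isOpen isOpen_Ioo le_rfl
  have hInt : IntegrableOn (deriv f) (Ioo 0 1) volume := hardy_aux_int f hgc hL2
  have hrep : ∀ x ∈ Ioo (0:ℝ) 1, f x = ∫ t in Ioc 0 x, deriv f t := hardy_aux_rep f hf hO hInt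
  -- measurable representative
  obtain ⟨D, hDsm, hDae⟩ := hL2.aestronglyMeasurable
  have hDm : Measurable D := hDsm.measurable
  set G : ℝ → ℝ≥0∞ := fun t => (‖D t‖₊ : ℝ≥0∞) ^ (2:ℝ) * ENNReal.ofReal (t ^ ((3:ℝ)/2)) with hG
  have hGm : Measurable G := by
    apply Measurable.mul
    · exact (hDm.nnnorm.coe_nnreal_ennreal).pow_const _
    · apply ENNReal.measurable_ofReal.comp
      measurability
  set I : ℝ≥0∞ := ∫⁻ t, (‖deriv f t / (t:ℂ)‖₊ : ℝ≥0∞) ^ (2:ℝ) ∂μ with hI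
  set J : ℝ≥0∞ := ∫⁻ x, (‖f x / (x:ℂ)^2‖₊ : ℝ≥0∞) ^ (2:ℝ) ∂μ with hJ
  -- pointwise bound and chain
  have hpt : ∀ x ∈ Ioo (0:ℝ) 1, (‖f x / (x:ℂ)^2‖₊ : ℝ≥0∞) ^ (2:ℝ) ≤
      ENNReal.ofReal ((2/3) * x ^ (-(5:ℝ)/2)) * ∫⁻ t in Ioc 0 x, G t := by
    intro x hx
    have hsub : Ioc (0:ℝ) x ⊆ Ioo 0 1 := fun t ht => ⟨ht.1, lt_of_le_of_lt ht.2 hx.2⟩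
    have hres : volume.restrict (Ioc (0:ℝ) x) = μ.restrict (Ioc 0 x) := by
      rw [hμ, Measure.restrict_restrict measurableSet_Ioc, inter_eq_self_of_subset_left hsub]
    have hDae' : ∀ᵐ t ∂(volume.restrict (Ioc 0 x)), D t = deriv f t / (t:ℂ) := by
      rw [hres]
      exact ae_restrict_of_ae (hDae.mono fun t h => h.symm)
    exact hardy_aux_pt f D hDm hx (hrep x hx) hDae'
  have hJ1 : J ≤ ∫⁻ t in Ioo (0:ℝ) 1, G t * ENNReal.ofReal ((4/9) * t ^ (-(3:ℝ)/2)) := by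
    refine le_trans ?_ (hardy_aux_swap G hGm)
    refine lintegral_mono_ae ?_
    filter_upwards [ae_restrict_mem measurableSet_Ioo] with x hx
    exact hpt x hx
  have hJ2 : (∫⁻ t in Ioo (0:ℝ) 1, G t * ENNReal.ofReal ((4/9) * t ^ (-(3:ℝ)/2)))
      = ENNReal.ofReal (4/9) * I := by
    rw [hI, ← lintegral_const_mul'' _ ?_]
    · refine lintegral_congr_ae ?_
      filter_upwards [ae_restrict_mem measurableSet_Ioo, hDae] with t ht hDt
      rw [hG]
      show (‖D t‖₊ : ℝ≥0∞) ^ (2:ℝ) * ENNReal.ofReal (t ^ ((3:ℝ)/2)) *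
          ENNReal.ofReal ((4/9) * t ^ (-(3:ℝ)/2)) = _
      rw [← hDt, mul_assoc, ← ENNReal.ofReal_mul (Real.rpow_nonneg ht.1.le _)]
      rw [mul_comm (t ^ ((3:ℝ)/2)), mul_assoc, ← Real.rpow_add ht.1]
      norm_num
      ring
    · exact (hL2.aestronglyMeasurable.nnnorm.aemeasurable.coe_nnreal_ennreal.pow_const _)
  -- eLpNorm identities
  have heLp : ∀ g : ℝ → ℂ, eLpNorm g 2 μ = (∫⁻ x, (‖g x‖₊ : ℝ≥0∞) ^ (2:ℝ) ∂μ) ^ ((1:ℝ)/2) := by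
    intro g
    rw [eLpNorm_eq_lintegral_rpow_enorm_toReal two_ne_zero ENNReal.ofNat_ne_top]
    simp [ENNReal.toReal_ofNat]
    rfl
  have hbound : eLpNorm (fun x : ℝ => f x / (x:ℂ)^2) 2 μ ≤ (2/3 : ℝ≥0∞) *
      eLpNorm (fun x : ℝ => deriv f x / (x:ℂ)) 2 μ := by
    rw [heLp, heLp]
    calc (J : ℝ≥0∞) ^ ((1:ℝ)/2) ≤ (ENNReal.ofReal (4/9) * I) ^ ((1:ℝ)/2) := by
          refine ENNReal.rpow_le_rpow ?_ (by norm_num)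
          rw [← hJ2]
          exact hJ1
      _ = ENNReal.ofReal (4/9) ^ ((1:ℝ)/2) * I ^ ((1:ℝ)/2) :=
          ENNReal.mul_rpow_of_nonneg _ _ (by norm_num)
      _ = (2/3 : ℝ≥0∞) * I ^ ((1:ℝ)/2) := by
          congr 1
          rw [ENNReal.ofReal_rpow_of_pos (by norm_num)]
          rw [show ((4:ℝ)/9) ^ ((1:ℝ)/2) = 2/3 by
            rw [show (4:ℝ)/9 = (2/3)^(2:ℕ) by norm_num, ← Real.rpow_natCast ((2:ℝ)/3) 2,
              ← Real.rpow_mul (by norm_num)]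
            norm_num]
          rw [ENNReal.ofReal_div_of_pos (by norm_num)]
          norm_num
  refine ⟨⟨?_, ?_⟩, hbound⟩
  · have h1 : AEStronglyMeasurable f μ :=
      hf.continuousOn.aestronglyMeasurable measurableSet_Ioo
    have h2 : AEStronglyMeasurable (fun x : ℝ => ((x:ℂ)^2)⁻¹) μ :=
      ((Complex.measurable_ofReal.pow_const 2).inv).aestronglyMeasurable
    simpa [div_eq_mul_inv, Pi.mul_def] using h1.mul h2
  · refine lt_of_le_of_lt hbound ?_
    refine ENNReal.mul_lt_top ?_ hL2.2
    have : (2/3 : ℝ≥0∞) ≤ 2 := ENNReal.div_le_of_le_mul (by norm_num)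
    exact lt_of_le_of_lt this ENNReal.ofNat_lt_top
end

section
/- For every ν ∈ (-1, -1/2), the number x₀^ν := (2/3)·sqrt( -(6ν³ + 21ν² + 21ν + 6)/(2ν + 3) ) is well-defined (the quantity under the square root is positive) and satisfies x₀^ν < 1/2. -/
/-! Put t = ν + 1 ∈ (0, 1/2). The cubic factors, and the radicand becomes
3t(1 - 2t)(1 + t)/(1 + 2t), which is positive. Since t(1 - 2t) ≤ 1/8, it is at most
3(1 + t)/(8(1 + 2t)) < 9/16, so x₀ < (2/3)·(3/4) = 1/2. -/

open Real Set

lemma cubic_eq_factored (ν : ℝ) :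
    6*ν^3 + 21*ν^2 + 21*ν + 6 = 3 * ((ν + 1) * (2*ν + 1) * (ν + 2)) := by
  ring

lemma mul_one_sub_two_mul_le (t : ℝ) : t * (1 - 2*t) ≤ 1/8 := by
  nlinarith [sq_nonneg (4*t - 1)]

section

variable {ν : ℝ} (hν : ν ∈ Ioo (-1 : ℝ) (-1/2))
include hν

lemma radicand_pos : 0 < -(6*ν^3 + 21*ν^2 + 21*ν + 6) / (2*ν + 3) := by
  obtain ⟨h₁, h₂⟩ := hν
  have hprod : (ν + 1) * (2*ν + 1) * (ν + 2) < 0 :=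
    mul_neg_of_neg_of_pos (mul_neg_of_pos_of_neg (by linarith) (by linarith)) (by linarith)
  rw [cubic_eq_factored]
  exact div_pos (by linarith) (by linarith)

lemma radicand_lt : -(6*ν^3 + 21*ν^2 + 21*ν + 6) / (2*ν + 3) < (3/4)^2 := by
  obtain ⟨h₁, h₂⟩ := hν
  have hquad : (ν + 1) * (1 - 2*(ν + 1)) ≤ 1/8 := mul_one_sub_two_mul_le (ν + 1)
  rw [div_lt_iff₀ (by linarith), cubic_eq_factored]
  nlinarith [mul_le_mul_of_nonneg_right hquad (by linarith : (0 : ℝ) ≤ ν + 2)]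

end

theorem x0_lt_half (ν : ℝ) (hν : ν ∈ Ioo (-1 : ℝ) (-1/2)) :
    0 < -(6*ν^3 + 21*ν^2 + 21*ν + 6) / (2*ν + 3) ∧
    (2/3) * Real.sqrt (-(6*ν^3 + 21*ν^2 + 21*ν + 6) / (2*ν + 3)) < 1/2 := by
  refine ⟨radicand_pos hν, ?_⟩
  have hsqrt := (Real.sqrt_lt' (by norm_num : (0 : ℝ) < 3/4)).2 (radicand_lt hν)
  linarith
end

section
/- Let α, β, ν > -1. The function D(x) := π²(1/4-α²)/(4 sin²(πx/2)) + π²(1/4-β²)/(4 cos²(πx/2)) - (1/4-ν²)/x² is bounded on (0,1) if and only if β ∈ {-1/2, 1/2} and α ∈ {ν, -ν}. -/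
set_option maxHeartbeats 1000000

open Real Set Filter Topology

lemma aux_sin_div : Tendsto (fun y : ℝ => Real.sin y / y) (𝓝[≠] (0:ℝ)) (𝓝 1) := by
  have h := Real.hasDerivAt_sin 0
  rw [Real.cos_zero, hasDerivAt_iff_tendsto_slope] at h
  refine h.congr (fun y => ?_)
  simp [slope_fun_def, Real.sin_zero]
  ring

lemma aux_sin_div_x : Tendsto (fun x : ℝ => Real.sin (π*x/2) / x) (𝓝[>] (0:ℝ)) (𝓝 (π/2)) := by
  have hmap : Tendsto (fun x : ℝ => π*x/2) (𝓝[>] (0:ℝ)) (𝓝[≠] (0:ℝ)) := by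
    apply tendsto_nhdsWithin_of_tendsto_nhds_of_eventually_within
    · have hc : Continuous (fun x : ℝ => π*x/2) := by continuity
      have := hc.tendsto 0
      simpa using this.mono_left nhdsWithin_le_nhds
    · filter_upwards [self_mem_nhdsWithin] with x hx
      have hx0 : (0:ℝ) < x := hx
      have : (0:ℝ) < π*x/2 := by positivity
      exact ne_of_gt this
  have h := aux_sin_div.comp hmap
  have h2 := h.const_mul (π/2)
  have hval : (π/2) * 1 = π/2 := by ring
  rw [hval] at h2
  refine h2.congr' ?_
  filter_upwards [self_mem_nhdsWithin] with x hx
  have hx0 : x ≠ 0 := ne_of_gt hx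
  have hπ : π ≠ 0 := Real.pi_ne_zero
  rw [Function.comp_apply]
  field_simp

lemma aux_x_div_sin : Tendsto (fun x : ℝ => x^2 / Real.sin (π*x/2)^2) (𝓝[>] (0:ℝ)) (𝓝 (4/π^2)) := by
  have h := (aux_sin_div_x.mul aux_sin_div_x).inv₀ (by positivity : (π/2)*(π/2) ≠ 0)
  have hval : ((π/2)*(π/2))⁻¹ = 4/π^2 := by
    rw [inv_eq_one_div]
    rw [div_eq_div_iff (by positivity) (by positivity)]
    ring
  rw [hval] at h
  refine h.congr' ?_
  filter_upwards [Ioo_mem_nhdsGT_of_mem (by norm_num : (0:ℝ) ∈ Ico (0:ℝ) 2)] with x hx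
  obtain ⟨hx0, hx2⟩ := hx
  have hs : (0:ℝ) < Real.sin (π*x/2) := by
    apply Real.sin_pos_of_pos_of_lt_pi
    · positivity
    · nlinarith [Real.pi_pos]
  have hx0' : x ≠ 0 := ne_of_gt hx0
  have hs' : Real.sin (π*x/2) ≠ 0 := ne_of_gt hs
  field_simp

lemma g_bound {x : ℝ} (hx0 : 0 < x) (hx1 : x < 1) :
    0 ≤ π^2/(4*Real.sin (π*x/2)^2) - 1/x^2 ∧ π^2/(4*Real.sin (π*x/2)^2) - 1/x^2 ≤ π^2 := by
  have hπ := Real.pi_pos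
  have hπ15 : π < 3.15 := by
    have := Real.pi_lt_d2
    linarith
  obtain ⟨t, ht⟩ : ∃ t : ℝ, t = π*x/2 := ⟨_, rfl⟩
  rw [← ht]
  have ht0 : 0 < t := by rw [ht]; positivity
  have htle : t < π/2 := by rw [ht]; nlinarith
  have hs0 : 0 < Real.sin t := Real.sin_pos_of_pos_of_lt_pi ht0 (by linarith)
  have hsle : Real.sin t ≤ t := Real.sin_le ht0.le
  have hsge : x ≤ Real.sin t := by
    have h := Real.mul_le_sin (x := t) ht0.le htle.le
    have h2 : 2/π * t = x := by rw [ht]; field_simp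
    linarith [h2 ▸ h]
  constructor
  · rw [sub_nonneg, div_le_div_iff₀ (by positivity) (by positivity)]
    nlinarith
  · rcases le_or_gt (1/2 : ℝ) x with hx | hx
    · have hs2 : (1/2:ℝ) ≤ Real.sin t := le_trans hx hsge
      have h1 : π^2/(4*Real.sin t^2) ≤ π^2 := by
        rw [div_le_iff₀ (by positivity)]
        nlinarith [sq_nonneg π, sq_nonneg (Real.sin t - 1/2)]
      have h2 : 0 < 1/x^2 := by positivity
      linarith
    · have ht1 : t < (79/100 : ℝ) := by rw [ht]; nlinarith
      have hcube : t - t^3/4 < Real.sin t := by have := Real.sin_gt_sub_cube ht0; linarith [pow_pos ht0 3]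
      have h79 : 0 < ((79/100 : ℝ) - t) * t := mul_pos (by linarith) ht0
      have ht2 : t^2 ≤ (63/100 : ℝ) := by nlinarith
      have hpos : 0 < t - t^3/4 := by nlinarith [mul_nonneg (sq_nonneg t) ht0.le]
      have e1 : t - Real.sin t < t^3/4 := by linarith
      have e3 : t^2 - Real.sin t^2 < t^4/2 := by
        nlinarith [mul_lt_mul_of_pos_right e1 (by positivity : (0:ℝ) < t + Real.sin t),
          mul_le_mul_of_nonneg_left (by linarith : t + Real.sin t ≤ 2*t) (by positivity : (0:ℝ) ≤ t^3/4)]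
      have e4 : (t - t^3/4)^2 < Real.sin t^2 := by
        nlinarith [mul_lt_mul_of_pos_left hcube hpos, mul_lt_mul_of_pos_right hcube hs0]
      have hu : ((84/100:ℝ):ℝ) ≤ 1 - t^2/4 := by linarith
      have hu2 : (7/10:ℝ) ≤ (1 - t^2/4)^2 := by nlinarith
      have e5' : t^4/2 ≤ 4*t^2*(t - t^3/4)^2 := by
        have hexp : 4*t^2*(t - t^3/4)^2 = 4*(t^2)^2*(1 - t^2/4)^2 := by ring
        rw [hexp]
        have hk : (0:ℝ) ≤ 4*(t^2)^2 := by positivity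
        have := mul_le_mul_of_nonneg_left hu2 hk
        nlinarith [this]
      have e5 : t^4/2 ≤ 4*Real.sin t^2*t^2 := by
        have := mul_lt_mul_of_pos_right e4 (show (0:ℝ) < 4*t^2 by positivity)
        nlinarith [this, e5']
      have heq : π^2/(4*Real.sin t^2) - 1/x^2 = (π^2*x^2 - 4*Real.sin t^2)/(4*Real.sin t^2*x^2) := by
        field_simp
      rw [heq, div_le_iff₀ (by positivity)]
      have hx2 : π^2*x^2 = 4*t^2 := by rw [ht]; ring
      have hx2' : π^2*(4*Real.sin t^2*x^2) = 16*Real.sin t^2*t^2 := by rw [ht]; ring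
      linarith

theorem potential_difference_bounded_iff (α β ν : ℝ)
    (hα : -1 < α) (hβ : -1 < β) (hν : -1 < ν) :
    (∃ C : ℝ, ∀ x ∈ Ioo (0:ℝ) 1,
        |π^2 * (1/4 - α^2) / (4 * Real.sin (π * x / 2)^2)
          + π^2 * (1/4 - β^2) / (4 * Real.cos (π * x / 2)^2)
          - (1/4 - ν^2) / x^2| ≤ C) ↔
      ((β = -1/2 ∨ β = 1/2) ∧ (α = ν ∨ α = -ν)) := by
  have hπ := Real.pi_pos
  constructor
  · rintro ⟨C, hC⟩
    -- Step 1: behaviour near x = 1 forces β² = 1/4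
    have hIoo1 : Ioo (0:ℝ) 1 ∈ 𝓝[<] (1:ℝ) :=
      Ioo_mem_nhdsLT_of_mem (by norm_num : (1:ℝ) ∈ Ioc (0:ℝ) 1)
    have hcos : Tendsto (fun x : ℝ => Real.cos (π*x/2)^2) (𝓝[<] (1:ℝ)) (𝓝 0) := by
      have hc : Continuous fun x : ℝ => Real.cos (π*x/2)^2 := by continuity
      have h := hc.tendsto 1
      have hval : Real.cos (π*1/2)^2 = 0 := by
        rw [show π*1/2 = π/2 by ring, Real.cos_pi_div_two]
        ring
      rw [hval] at h
      exact h.mono_left nhdsWithin_le_nhds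
    have hterm1 : Tendsto (fun x : ℝ =>
        Real.cos (π*x/2)^2 * (π^2 * (1/4 - α^2) / (4 * Real.sin (π*x/2)^2)))
        (𝓝[<] (1:ℝ)) (𝓝 0) := by
      have hc : ContinuousAt (fun x : ℝ =>
          Real.cos (π*x/2)^2 * (π^2 * (1/4 - α^2) / (4 * Real.sin (π*x/2)^2))) 1 := by
        apply ContinuousAt.mul (by fun_prop)
        apply ContinuousAt.div (by fun_prop) (by fun_prop)
        rw [show π*1/2 = π/2 by ring]
        simp [Real.sin_pi_div_two]
      have hval : Real.cos (π*1/2)^2 * (π^2 * (1/4 - α^2) / (4 * Real.sin (π*1/2)^2)) = 0 := by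
        rw [show π*1/2 = π/2 by ring, Real.cos_pi_div_two]
        norm_num
      have h := hc.tendsto
      rw [hval] at h
      exact h.mono_left nhdsWithin_le_nhds
    have hterm3 : Tendsto (fun x : ℝ =>
        Real.cos (π*x/2)^2 * ((1/4 - ν^2) / x^2)) (𝓝[<] (1:ℝ)) (𝓝 0) := by
      have hc : ContinuousAt (fun x : ℝ => Real.cos (π*x/2)^2 * ((1/4 - ν^2) / x^2)) 1 := by
        apply ContinuousAt.mul (by fun_prop)
        apply ContinuousAt.div (by fun_prop) (by fun_prop)
        norm_num
      have hval : Real.cos (π*1/2)^2 * ((1/4 - ν^2) / (1:ℝ)^2) = 0 := by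
        rw [show π*1/2 = π/2 by ring, Real.cos_pi_div_two]
        norm_num
      have h := hc.tendsto
      rw [hval] at h
      exact h.mono_left nhdsWithin_le_nhds
    have hsum := (hterm1.add (tendsto_const_nhds (x := π^2*(1/4-β^2)/4))).sub hterm3
    rw [zero_add, sub_zero] at hsum
    have hlim : Tendsto (fun x : ℝ => Real.cos (π*x/2)^2 *
        (π^2 * (1/4 - α^2) / (4 * Real.sin (π * x / 2)^2)
          + π^2 * (1/4 - β^2) / (4 * Real.cos (π * x / 2)^2)
          - (1/4 - ν^2) / x^2)) (𝓝[<] (1:ℝ)) (𝓝 (π^2*(1/4-β^2)/4)) := by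
      refine hsum.congr' ?_
      filter_upwards [hIoo1] with x hx
      obtain ⟨hx0, hx1⟩ := hx
      have hcosne : Real.cos (π*x/2) ≠ 0 := by
        have : 0 < Real.cos (π*x/2) := by
          apply Real.cos_pos_of_mem_Ioo
          constructor <;> nlinarith
        exact ne_of_gt this
      have hsinne : Real.sin (π*x/2) ≠ 0 := by
        have : 0 < Real.sin (π*x/2) := by
          apply Real.sin_pos_of_pos_of_lt_pi <;> nlinarith
        exact ne_of_gt this
      have hxne : x ≠ 0 := ne_of_gt hx0
      field_simp
    have hzero : Tendsto (fun x : ℝ => Real.cos (π*x/2)^2 *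
        (π^2 * (1/4 - α^2) / (4 * Real.sin (π * x / 2)^2)
          + π^2 * (1/4 - β^2) / (4 * Real.cos (π * x / 2)^2)
          - (1/4 - ν^2) / x^2)) (𝓝[<] (1:ℝ)) (𝓝 0) := by
      apply squeeze_zero_norm' (a := fun x : ℝ => Real.cos (π*x/2)^2 * C)
      · filter_upwards [hIoo1] with x hx
        rw [Real.norm_eq_abs, abs_mul, abs_of_nonneg (sq_nonneg _)]
        exact mul_le_mul_of_nonneg_left (hC x hx) (sq_nonneg _)
      · simpa using hcos.mul_const C
    have hb0 : π^2*(1/4-β^2)/4 = 0 := tendsto_nhds_unique hlim hzero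
    have hb4 : 1/4 - β^2 = 0 := by
      have hπ2 : (π:ℝ)^2 ≠ 0 := pow_ne_zero _ Real.pi_ne_zero
      rw [div_eq_zero_iff] at hb0
      rcases hb0 with h | h
      · rcases mul_eq_zero.1 h with h' | h'
        · exact absurd h' hπ2
        · exact h'
      · norm_num at h
    have hbres : β = -1/2 ∨ β = 1/2 := by
      have hfac : (β - 1/2) * (β + 1/2) = 0 := by linear_combination -hb4
      rcases mul_eq_zero.1 hfac with h | h
      · right; linarith
      · left; linarith
    -- Step 2: behaviour near x = 0 forces α² = ν²
    have hIoo0 : Ioo (0:ℝ) 1 ∈ 𝓝[>] (0:ℝ) :=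
      Ioo_mem_nhdsGT_of_mem (by norm_num : (0:ℝ) ∈ Ico (0:ℝ) 1)
    have hterm1' : Tendsto (fun x : ℝ =>
        x^2 * (π^2 * (1/4 - α^2) / (4 * Real.sin (π*x/2)^2))) (𝓝[>] (0:ℝ)) (𝓝 (1/4 - α^2)) := by
      have h := aux_x_div_sin.const_mul (π^2*(1/4-α^2)/4)
      have hval : (π^2*(1/4-α^2)/4) * (4/π^2) = 1/4 - α^2 := by
        field_simp
      rw [hval] at h
      refine h.congr' ?_
      filter_upwards [hIoo0] with x hx
      obtain ⟨hx0, hx1⟩ := hx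
      have hsinne : Real.sin (π*x/2) ≠ 0 := by
        have : 0 < Real.sin (π*x/2) := by
          apply Real.sin_pos_of_pos_of_lt_pi <;> nlinarith
        exact ne_of_gt this
      field_simp
    have hterm2' : Tendsto (fun x : ℝ =>
        x^2 * (π^2 * (1/4 - β^2) / (4 * Real.cos (π*x/2)^2))) (𝓝[>] (0:ℝ)) (𝓝 0) := by
      have hc : ContinuousAt (fun x : ℝ =>
          x^2 * (π^2 * (1/4 - β^2) / (4 * Real.cos (π*x/2)^2))) 0 := by
        apply ContinuousAt.mul (by fun_prop)
        apply ContinuousAt.div (by fun_prop) (by fun_prop)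
        norm_num
      have hval : (0:ℝ)^2 * (π^2 * (1/4 - β^2) / (4 * Real.cos (π*0/2)^2)) = 0 := by
        norm_num
      have h := hc.tendsto
      rw [hval] at h
      exact h.mono_left nhdsWithin_le_nhds
    have hsum' := (hterm1'.add hterm2').sub (tendsto_const_nhds (x := (1/4 - ν^2 : ℝ)))
    rw [add_zero] at hsum'
    have hlim' : Tendsto (fun x : ℝ => x^2 *
        (π^2 * (1/4 - α^2) / (4 * Real.sin (π * x / 2)^2)
          + π^2 * (1/4 - β^2) / (4 * Real.cos (π * x / 2)^2)
          - (1/4 - ν^2) / x^2)) (𝓝[>] (0:ℝ)) (𝓝 ((1/4 - α^2) - (1/4 - ν^2))) := by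
      refine hsum'.congr' ?_
      filter_upwards [hIoo0] with x hx
      obtain ⟨hx0, hx1⟩ := hx
      have hxne : x ≠ 0 := ne_of_gt hx0
      field_simp
    have hzero' : Tendsto (fun x : ℝ => x^2 *
        (π^2 * (1/4 - α^2) / (4 * Real.sin (π * x / 2)^2)
          + π^2 * (1/4 - β^2) / (4 * Real.cos (π * x / 2)^2)
          - (1/4 - ν^2) / x^2)) (𝓝[>] (0:ℝ)) (𝓝 0) := by
      apply squeeze_zero_norm' (a := fun x : ℝ => x^2 * C)
      · filter_upwards [hIoo0] with x hx
        rw [Real.norm_eq_abs, abs_mul, abs_of_nonneg (sq_nonneg _)]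
        exact mul_le_mul_of_nonneg_left (hC x hx) (sq_nonneg _)
      · have hc : Continuous fun x : ℝ => x^2 * C := by continuity
        have h := hc.tendsto 0
        norm_num at h
        exact h.mono_left nhdsWithin_le_nhds
    have ha0 : (1/4 - α^2) - (1/4 - ν^2) = 0 := tendsto_nhds_unique hlim' hzero'
    have hares : α = ν ∨ α = -ν := by
      have hfac : (α - ν) * (α + ν) = 0 := by linear_combination -ha0
      rcases mul_eq_zero.1 hfac with h | h
      · left; linarith
      · right; linarith
    exact ⟨hbres, hares⟩
  · rintro ⟨hb, ha⟩
    have hb2 : (1/4 : ℝ) - β^2 = 0 := by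
      rcases hb with h | h <;> rw [h] <;> norm_num
    have ha2 : α^2 = ν^2 := by
      rcases ha with h | h <;> rw [h] <;> ring
    refine ⟨|1/4 - ν^2| * π^2, fun x hx => ?_⟩
    obtain ⟨hx0, hx1⟩ := hx
    obtain ⟨hg0, hg1⟩ := g_bound hx0 hx1
    have hexpr : π^2 * (1/4 - α^2) / (4 * Real.sin (π * x / 2)^2)
          + π^2 * (1/4 - β^2) / (4 * Real.cos (π * x / 2)^2)
          - (1/4 - ν^2) / x^2
        = (1/4 - ν^2) * (π^2/(4*Real.sin (π*x/2)^2) - 1/x^2) := by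
      rw [ha2, hb2]
      ring
    rw [hexpr, abs_mul]
    have habs : |π^2/(4*Real.sin (π*x/2)^2) - 1/x^2| ≤ π^2 := by
      rw [abs_of_nonneg hg0]
      exact hg1
    exact mul_le_mul_of_nonneg_left habs (abs_nonneg _)
end
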